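/- For μ₀, mₛ > 0, define Φ(b) = −mₛ|b| + (μ₀/2)mₛ² on ℝ³ (the formal single-field density of hard saturation). Then the two-step transformation (−Φ)*(m) − (μ₀/2)|m|², where (−Φ)* is the convex conjugate, equals (μ₀/2)(mₛ² − |m|²) for |m| ≤ mₛ and +∞ for |m| > mₛ. In particular, this function is neither the indicator of the sphere {|m| = mₛ} nor the indicator of the ball {|m| ≤ mₛ}, i.e., the hard saturation model is not recovered by the duality transformation. -/

import Mathlib

open scoped RealInnerProductSpace

/-- The two-step transform `(−Φ)*(m) − (μ₀/2)|m|²` for the hard-saturation single-field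
density `Φ(b) = −mₛ|b| + (μ₀/2)mₛ²`. -/
noncomputable def hardSatTransform (μ₀ ms : ℝ) (m : EuclideanSpace ℝ (Fin 3)) : EReal :=
  (⨆ b : EuclideanSpace ℝ (Fin 3),
    ((⟪m, b⟫ - (ms * ‖b‖ - μ₀ / 2 * ms ^ 2) : ℝ) : EReal)) -
    ((μ₀ / 2 * ‖m‖ ^ 2 : ℝ) : EReal)

/-! The convex conjugate of `c‖·‖` is the indicator of the closed ball of radius `c`: on the
ball Cauchy–Schwarz bounds `⟪m, b⟫ - c‖b‖` by `0`, attained at `b = 0`; outside it the ray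
`b = t • m` drives it to `+∞`. Subtracting `(μ₀/2)|m|²` from the resulting indicator (shifted
by `(μ₀/2)mₛ²`) leaves `(μ₀/2)(mₛ² − |m|²)` on the ball, which vanishes only on the sphere and
is positive at the centre, so the transform is neither indicator. -/

open Filter

theorem EReal.iSup_coe_eq_top_of_tendsto {α ι : Type*} {l : Filter α} [l.NeBot] {f : ι → ℝ}
    {g : α → ι} (hf : Tendsto (f ∘ g) l atTop) : ⨆ i, (f i : EReal) = ⊤ := by
  refine iSup_eq_top.2 fun c hc => ?_
  obtain ⟨r, hcr, -⟩ := EReal.exists_between_coe_real hc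
  obtain ⟨a, ha⟩ := (hf.eventually_gt_atTop r).exists
  exact ⟨g a, hcr.trans (EReal.coe_lt_coe_iff.2 ha)⟩

section InnerProductSpace

variable {E : Type*} [NormedAddCommGroup E] [InnerProductSpace ℝ E]

theorem inner_sub_mul_norm_nonpos {m : E} {c : ℝ} (h : ‖m‖ ≤ c) (b : E) :
    ⟪m, b⟫ - c * ‖b‖ ≤ 0 := by
  have := real_inner_le_norm m b
  have := mul_le_mul_of_nonneg_right h (norm_nonneg b)
  linarith

theorem tendsto_inner_smul_sub_mul_norm_smul {m : E} {c : ℝ} (hc : 0 ≤ c) (h : c < ‖m‖) :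
    Tendsto (fun t : ℝ => ⟪m, t • m⟫ - c * ‖t • m‖) atTop atTop := by
  have hslope : 0 < ‖m‖ * (‖m‖ - c) := mul_pos (hc.trans_lt h) (sub_pos.2 h)
  refine (tendsto_id.atTop_mul_const hslope).congr' ?_
  filter_upwards [eventually_ge_atTop 0] with t ht
  rw [real_inner_smul_right, real_inner_self_eq_norm_sq, norm_smul, Real.norm_of_nonneg ht, id]
  ring

theorem iSup_inner_sub_mul_norm_sub_eq_ite (m : E) {c : ℝ} (hc : 0 ≤ c) (K : ℝ) :
    ⨆ b : E, ((⟪m, b⟫ - (c * ‖b‖ - K) : ℝ) : EReal) = if ‖m‖ ≤ c then (K : EReal) else ⊤ := by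
  split_ifs with h
  · refine le_antisymm (iSup_le fun b => ?_) (le_iSup_of_le 0 (by simp))
    exact EReal.coe_le_coe_iff.2 (by linarith [inner_sub_mul_norm_nonpos h b])
  · refine EReal.iSup_coe_eq_top_of_tendsto (l := atTop) (g := fun t : ℝ => t • m) ?_
    refine (tendsto_atTop_add_const_right _ K
      (tendsto_inner_smul_sub_mul_norm_smul hc (not_le.1 h))).congr fun t => ?_
    simp only [Function.comp_apply]
    ring

end InnerProductSpace

theorem hardSatTransform_eq_ite (μ₀ : ℝ) {ms : ℝ} (hms : 0 ≤ ms) (m : EuclideanSpace ℝ (Fin 3)) :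
    hardSatTransform μ₀ ms m =
      if ‖m‖ ≤ ms then ((μ₀ / 2 * (ms ^ 2 - ‖m‖ ^ 2) : ℝ) : EReal) else ⊤ := by
  rw [hardSatTransform, iSup_inner_sub_mul_norm_sub_eq_ite m hms]
  split_ifs
  · rw [← EReal.coe_sub]
    ring_nf
  · exact EReal.top_sub_coe _

/-- the two-step transform of the hard-saturation density equals
`(μ₀/2)(mₛ² − |m|²)` for `|m| ≤ mₛ` and `+∞` otherwise; in particular it is neither the
indicator of the sphere `{|m| = mₛ}` nor the indicator of the ball `{|m| ≤ mₛ}`. -/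
theorem stmt18
    (μ₀ ms : ℝ) (hμ₀ : 0 < μ₀) (hms : 0 < ms) :
    (∀ m : EuclideanSpace ℝ (Fin 3),
      hardSatTransform μ₀ ms m =
        if ‖m‖ ≤ ms then ((μ₀ / 2 * (ms ^ 2 - ‖m‖ ^ 2) : ℝ) : EReal) else ⊤) ∧
    ¬ (∀ m : EuclideanSpace ℝ (Fin 3),
      hardSatTransform μ₀ ms m = if ‖m‖ = ms then (0 : EReal) else ⊤) ∧
    ¬ (∀ m : EuclideanSpace ℝ (Fin 3),
      hardSatTransform μ₀ ms m = if ‖m‖ ≤ ms then (0 : EReal) else ⊤) := by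
  have at_zero : hardSatTransform μ₀ ms 0 = ((μ₀ / 2 * ms ^ 2 : ℝ) : EReal) := by
    simp [hardSatTransform_eq_ite μ₀ hms.le, hms.le]
  refine ⟨hardSatTransform_eq_ite μ₀ hms.le, fun h => ?_, fun h => ?_⟩
  · have h0 := h 0
    rw [at_zero, if_neg (by simpa using hms.ne)] at h0
    exact EReal.coe_ne_top _ h0
  · have h0 := h 0
    rw [at_zero, if_pos (by simpa using hms.le)] at h0
    exact (by positivity : 0 < μ₀ / 2 * ms ^ 2).ne' (EReal.coe_eq_zero.1 h0)
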